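/- For N ≥ 3, |N(log N + 2γ − 1) − D(N)| ≤ C√N for an absolute constant C, where γ is Euler's constant. -/

import Mathlib

/-!
Dirichlet's hyperbola method. `D(N)` counts the lattice points `(a, b)` with `a, b ≥ 1` and
`a b ≤ N`. With `K = ⌊√N⌋` every such point has `a ≤ K` or `b ≤ K`, both when it lies in the
square `[1, K]²`, so by symmetry `D(N) = 2 ∑_{a ≤ K} ⌊N / a⌋ - K²`. Dropping the floors costs at
most `K`, and `H_K = log K + γ + O(1/K)`, `log N = 2 log K + O(1/K)`, `N - K² = O(K)`; after
multiplying by `N = O(K²)` every error term is `O(K) = O(√N)`.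
-/

open Finset

/-- `d n` is the number of positive divisors of `n`. -/
noncomputable def divFun (n : ℕ) : ℕ := n.divisors.card

/-- `D N = ∑_{n=1}^N d(n)`, the summatory divisor function. -/
noncomputable def sumDiv (N : ℕ) : ℕ := ∑ n ∈ Finset.Icc 1 N, divFun n

open Real

def hyperbolaPoints (N : ℕ) : Finset (ℕ × ℕ) :=
  {p ∈ Icc 1 N ×ˢ Icc 1 N | p.1 * p.2 ≤ N}

lemma mem_hyperbolaPoints {N : ℕ} {p : ℕ × ℕ} :
    p ∈ hyperbolaPoints N ↔ 1 ≤ p.1 ∧ 1 ≤ p.2 ∧ p.1 * p.2 ≤ N := by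
  simp only [hyperbolaPoints, mem_filter, mem_product, mem_Icc]
  constructor
  · rintro ⟨⟨⟨h1, -⟩, h2, -⟩, h⟩
    exact ⟨h1, h2, h⟩
  · rintro ⟨h1, h2, h⟩
    exact ⟨⟨⟨h1, (Nat.le_mul_of_pos_right _ h2).trans h⟩, h2,
      (Nat.le_mul_of_pos_left _ h1).trans h⟩, h⟩

lemma card_hyperbolaPoints_filter_fst_le (N M : ℕ) :
    #{p ∈ hyperbolaPoints N | p.1 ≤ M} = ∑ a ∈ Icc 1 M, N / a := by
  have h : {p ∈ hyperbolaPoints N | p.1 ≤ M}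
      = (Icc 1 M).biUnion fun a => {a} ×ˢ Icc 1 (N / a) := by
    ext ⟨a, b⟩
    simp only [mem_filter, mem_hyperbolaPoints, mem_biUnion, mem_product, mem_singleton, mem_Icc]
    constructor
    · rintro ⟨⟨ha, hb, hab⟩, haM⟩
      exact ⟨a, ⟨ha, haM⟩, rfl, hb, (Nat.le_div_iff_mul_le ha).2 (by rwa [mul_comm])⟩
    · rintro ⟨a, ⟨ha, haM⟩, rfl, hb, hbN⟩
      exact ⟨⟨ha, hb, by rw [mul_comm]; exact (Nat.le_div_iff_mul_le ha).1 hbN⟩, haM⟩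
  rw [h, card_biUnion fun a _ a' _ hne => disjoint_left.2 fun p hp hp' => hne <| by
    simp only [mem_product, mem_singleton] at hp hp'; rw [← hp.1, hp'.1]]
  simp

lemma sumDiv_eq_card_hyperbolaPoints (N : ℕ) : sumDiv N = #(hyperbolaPoints N) := by
  have hfilter : {p ∈ hyperbolaPoints N | p.1 ≤ N} = hyperbolaPoints N :=
    filter_true_of_mem fun p hp => by
      obtain ⟨-, h2, h⟩ := mem_hyperbolaPoints.1 hp
      exact (Nat.le_mul_of_pos_right _ h2).trans h
  have h := ArithmeticFunction.sum_Ioc_sigma0_eq_sum_div N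
  rw [← Icc_add_one_left_eq_Ioc, zero_add] at h
  rw [← hfilter, card_hyperbolaPoints_filter_fst_le, ← h, sumDiv]
  simp only [divFun, ArithmeticFunction.sigma_zero_apply]

lemma card_hyperbolaPoints_add_sqrt_mul_sqrt (N : ℕ) :
    #(hyperbolaPoints N) + N.sqrt * N.sqrt = 2 * #{p ∈ hyperbolaPoints N | p.1 ≤ N.sqrt} := by
  set K := N.sqrt
  have hunion : {p ∈ hyperbolaPoints N | p.1 ≤ K} ∪ {p ∈ hyperbolaPoints N | p.2 ≤ K}
      = hyperbolaPoints N := by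
    rw [← filter_or]
    refine filter_true_of_mem fun p hp => ?_
    by_contra! hlarge
    have := Nat.mul_le_mul hlarge.1 hlarge.2
    exact (Nat.lt_succ_sqrt N).not_ge (this.trans (mem_hyperbolaPoints.1 hp).2.2)
  have hinter : {p ∈ hyperbolaPoints N | p.1 ≤ K} ∩ {p ∈ hyperbolaPoints N | p.2 ≤ K}
      = Icc 1 K ×ˢ Icc 1 K := by
    rw [← filter_and]
    ext p
    simp only [mem_filter, mem_hyperbolaPoints, mem_product, mem_Icc]
    constructor
    · rintro ⟨⟨h1, h2, -⟩, hK1, hK2⟩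
      exact ⟨⟨h1, hK1⟩, h2, hK2⟩
    · rintro ⟨⟨h1, hK1⟩, h2, hK2⟩
      exact ⟨⟨h1, h2, (Nat.mul_le_mul hK1 hK2).trans (Nat.sqrt_le N)⟩, hK1, hK2⟩
  have hswap : #{p ∈ hyperbolaPoints N | p.2 ≤ K} = #{p ∈ hyperbolaPoints N | p.1 ≤ K} := by
    refine card_nbij' Prod.swap Prod.swap (fun p hp => ?_) (fun p hp => ?_) (fun p _ => rfl)
      (fun p _ => rfl) <;>
    · simp only [coe_filter, Set.mem_ofPred_eq, mem_hyperbolaPoints, Prod.fst_swap,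
        Prod.snd_swap] at hp ⊢
      exact ⟨⟨hp.1.2.1, hp.1.1, by rw [mul_comm]; exact hp.1.2.2⟩, hp.2⟩
  have := card_union_add_card_inter {p ∈ hyperbolaPoints N | p.1 ≤ K}
    {p ∈ hyperbolaPoints N | p.2 ≤ K}
  rw [hunion, hinter, hswap, card_product, Nat.card_Icc, Nat.add_sub_cancel] at this
  omega

theorem sumDiv_add_sqrt_mul_sqrt (N : ℕ) :
    sumDiv N + N.sqrt * N.sqrt = 2 * ∑ a ∈ Icc 1 N.sqrt, N / a := by
  rw [sumDiv_eq_card_hyperbolaPoints, card_hyperbolaPoints_add_sqrt_mul_sqrt,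
    card_hyperbolaPoints_filter_fst_le]

lemma abs_mul_harmonic_sub_sum_div_le (N K : ℕ) :
    |N * (harmonic K : ℝ) - ∑ a ∈ Icc 1 K, ((N / a : ℕ) : ℝ)| ≤ K := by
  rw [harmonic_eq_sum_Icc, Rat.cast_sum, mul_sum, ← sum_sub_distrib]
  refine (abs_sum_le_sum_abs _ _).trans ?_
  calc ∑ a ∈ Icc 1 K, |N * ((a⁻¹ : ℚ) : ℝ) - ((N / a : ℕ) : ℝ)|
      ≤ ∑ a ∈ Icc 1 K, (1 : ℝ) := by
        refine sum_le_sum fun a _ => ?_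
        rw [← Nat.floor_div_eq_div (K := ℝ), Rat.cast_inv, Rat.cast_natCast, ← div_eq_mul_inv,
          abs_of_nonneg (sub_nonneg.2 (Nat.floor_le (by positivity)))]
        linarith [Nat.lt_floor_add_one ((N : ℝ) / a)]
    _ = K := by simp

lemma log_add_one_sub_log_le_inv {x : ℝ} (hx : 0 < x) : log (x + 1) - log x ≤ x⁻¹ := by
  rw [← log_div (by positivity) hx.ne']
  calc log ((x + 1) / x) ≤ (x + 1) / x - 1 := log_le_sub_one_of_pos (by positivity)
    _ = x⁻¹ := by field_simp; ring

lemma eulerMascheroniConstant_lt_harmonic_sub_log {K : ℕ} (hK : K ≠ 0) :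
    eulerMascheroniConstant < harmonic K - log K := by
  simpa [eulerMascheroniSeq', hK] using eulerMascheroniConstant_lt_eulerMascheroniSeq' K

lemma harmonic_sub_log_le_eulerMascheroniConstant_add_inv {K : ℕ} (hK : K ≠ 0) :
    harmonic K - log K ≤ eulerMascheroniConstant + (K : ℝ)⁻¹ := by
  have hlt := eulerMascheroniSeq_lt_eulerMascheroniConstant K
  have hlog := log_add_one_sub_log_le_inv (x := K) (by positivity)
  rw [eulerMascheroniSeq] at hlt
  linarith

lemma log_sub_two_mul_log_sqrt_mem_Icc {N : ℕ} (hN : N ≠ 0) :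
    log N - 2 * log N.sqrt ∈ Set.Icc (0 : ℝ) (2 / N.sqrt) := by
  have hK : (0 : ℝ) < N.sqrt := by exact_mod_cast Nat.sqrt_pos.2 (Nat.pos_of_ne_zero hN)
  have hlog : log N = 2 * log √(N : ℝ) := by rw [log_sqrt (by positivity)]; ring
  have hlow : log N.sqrt ≤ log √(N : ℝ) := log_le_log hK nat_sqrt_le_real_sqrt
  have hhigh : log √(N : ℝ) ≤ log (N.sqrt + 1) :=
    log_le_log (by positivity) real_sqrt_lt_nat_sqrt_succ.le
  have hstep := log_add_one_sub_log_le_inv hK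
  constructor <;> [skip; rw [div_eq_mul_inv]] <;> linarith

theorem abs_sub_sumDiv_le {N : ℕ} (hN : N ≠ 0) :
    |(N : ℝ) * (log N + 2 * eulerMascheroniConstant - 1) - sumDiv N| ≤ 10 * N.sqrt := by
  set K := N.sqrt
  have hK : K ≠ 0 := (Nat.sqrt_pos.2 (Nat.pos_of_ne_zero hN)).ne'
  have hK1 : (1 : ℝ) ≤ K := by exact_mod_cast Nat.one_le_iff_ne_zero.2 hK
  have hD : (sumDiv N : ℝ) = 2 * ∑ a ∈ Icc 1 K, ((N / a : ℕ) : ℝ) - K * K := by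
    have := sumDiv_add_sqrt_mul_sqrt N
    rw [eq_sub_iff_add_eq]; exact_mod_cast this
  have hNlow : (K : ℝ) * K ≤ N := by exact_mod_cast Nat.sqrt_le N
  have hNhigh : (N : ℝ) ≤ K * K + 2 * K := by
    have := Nat.sqrt_le_add N; rw [add_assoc, ← two_mul] at this; exact_mod_cast this
  have hS := abs_le.1 (abs_mul_harmonic_sub_sum_div_le N K)
  have hγlow := eulerMascheroniConstant_lt_harmonic_sub_log hK
  have hγhigh := harmonic_sub_log_le_eulerMascheroniConstant_add_inv hK
  have hlog := log_sub_two_mul_log_sqrt_mem_Icc hN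
  set A := log N - 2 * log K
  set B := (harmonic K : ℝ) - log K - eulerMascheroniConstant
  have hA : (K : ℝ) * A ≤ 2 := by
    rw [← le_div_iff₀' (by positivity)]; exact hlog.2
  have hB : (K : ℝ) * B ≤ 1 := by
    rw [← le_div_iff₀' (by positivity), one_div]; linarith
  have hNA : 0 ≤ N * A ∧ N * A ≤ 6 * K := ⟨by nlinarith [hlog.1], by nlinarith [hlog.1]⟩
  have hNB : 0 ≤ N * B ∧ N * B ≤ 3 * K := ⟨by nlinarith, by nlinarith⟩
  have hsplit : (N : ℝ) * (log N + 2 * eulerMascheroniConstant - 1) - sumDiv N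
      = N * A - 2 * (N * B) + 2 * (N * harmonic K - ∑ a ∈ Icc 1 K, ((N / a : ℕ) : ℝ))
        - (N - K * K) := by
    rw [hD]; ring
  rw [hsplit, abs_le]
  constructor <;> linarith

/-- For `N ≥ 3`, `|N(log N + 2γ − 1) − D(N)| ≤ C √N` for an absolute constant `C`,
where `γ` is the Euler–Mascheroni constant. -/
theorem sumDiv_normalization :
    ∃ C : ℝ, 0 < C ∧ ∀ N : ℕ, 3 ≤ N →
      |(N : ℝ) * (Real.log N + 2 * Real.eulerMascheroniConstant - 1) - (sumDiv N : ℝ)|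
        ≤ C * Real.sqrt N := by
  refine ⟨10, by norm_num, fun N hN => ?_⟩
  calc _ ≤ 10 * (N.sqrt : ℝ) := abs_sub_sumDiv_le (by omega)
    _ ≤ 10 * √(N : ℝ) := by gcongr; exact nat_sqrt_le_real_sqrt
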